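/- For all equivalent reduced n-expressions u, v, one has dist(u,v) ≥ Inv(S(u),S(v))/3, where Inv(S(u),S(v)) is the total number of unordered pairs of names whose relative order differs between S(u) and S(v); indeed, a type I braid relation changes Inv by exactly 3 and a commutation relation changes it by exactly 1. -/

import Mathlib

open scoped Classical

noncomputable section

/-- adjacent transposition `s i = (i, i+1)` acting on ℕ (1-indexed positions) -/
def s (i : ℕ) : Equiv.Perm ℕ := Equiv.swap i (i + 1)

/-- permutation represented by a word; letters are applied left to right
(`wperm (u ++ v) = wperm v * wperm u`, i.e. `u` first, then `v`). -/
def wperm (w : List ℕ) : Equiv.Perm ℕ := ((w.map s).reverse).prod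

/-- `w` is an `n`-expression: a word in the letters `s 1, ..., s (n-1)` -/
def IsExpr (n : ℕ) (w : List ℕ) : Prop := ∀ i ∈ w, 1 ≤ i ∧ i + 1 ≤ n

/-- set of inversions of a permutation of `{1,...,n}` -/
def invSet (n : ℕ) (π : Equiv.Perm ℕ) : Finset (ℕ × ℕ) :=
  (Finset.Icc 1 n ×ˢ Finset.Icc 1 n).filter (fun pq => pq.1 < pq.2 ∧ π pq.2 < π pq.1)

/-- a reduced `n`-expression: its length equals the inversion number of the
permutation it represents -/
def ReducedExpr (n : ℕ) (w : List ℕ) : Prop :=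
  IsExpr n w ∧ w.length = (invSet n (wperm w)).card

/-- one application of a braid relation `s i s j s i = s j s i s j`, `|i-j| = 1` -/
inductive StepI : List ℕ → List ℕ → Prop
  | mk (a b : List ℕ) (i j : ℕ) (h : i + 1 = j ∨ j + 1 = i) :
      StepI (a ++ i :: j :: i :: b) (a ++ j :: i :: j :: b)

/-- one application of a commutation relation `s i s j = s j s i`, `|i-j| ≥ 2` -/
inductive StepII : List ℕ → List ℕ → Prop
  | mk (a b : List ℕ) (i j : ℕ) (h : i + 2 ≤ j ∨ j + 2 ≤ i) :
      StepII (a ++ i :: j :: b) (a ++ j :: i :: b)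

def BraidStep (u v : List ℕ) : Prop := StepI u v ∨ StepII u v

/-- `c` is a derivation from `u` to `v` by braid relations -/
def IsDeriv (u v : List ℕ) (c : List (List ℕ)) : Prop :=
  c.Chain' BraidStep ∧ c.head? = some u ∧ c.getLast? = some v

/-- combinatorial distance: minimal number of braid relations transforming `u` into `v` -/
def dist (u v : List ℕ) : ℕ :=
  sInf {k | ∃ c, IsDeriv u v c ∧ c.length = k + 1}

/-- the word `s_{j,i} = s_{j-1} s_{j-2} ... s_i` (empty if `j ≤ i`) -/
def sji (j i : ℕ) : List ℕ := (List.range (j - i)).map (fun k => j - 1 - k)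

/-- the normal word `s_{1,f(1)} s_{2,f(2)} ... s_{n,f(n)}` -/
def normalWord (n : ℕ) (f : ℕ → ℕ) : List ℕ :=
  ((List.range n).map (fun k => sji (k + 1) (f (k + 1)))).flatten

/-- `f : {1,...,n} → {1,...,n}` with `1 ≤ f i ≤ i` for all `i` -/
def IsNormalFun (n : ℕ) (f : ℕ → ℕ) : Prop := ∀ i ∈ Finset.Icc 1 n, 1 ≤ f i ∧ f i ≤ i

/-- names of the successive crossings: the name of a letter is the pair of starting
positions of the two strands crossing there -/
def namesAux : Equiv.Perm ℕ → List ℕ → List (Finset ℕ)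
  | _, [] => []
  | π, i :: rest => ({π⁻¹ i, π⁻¹ (i + 1)} : Finset ℕ) :: namesAux (s i * π) rest

/-- the name sequence `S(w)` of a word -/
def names (w : List ℕ) : List (Finset ℕ) := namesAux 1 w

/-- two entries occur in the same relative order in `S` and `S'` -/
def sameOrder (S S' : List (Finset ℕ)) (a b : Finset ℕ) : Prop :=
  (S.idxOf a < S.idxOf b) ↔ (S'.idxOf a < S'.idxOf b)

/-- `I₃(S,S')`: number of triples `{p,q,r} ⊆ {1,...,n}` such that the relative order of
the three pairs `{p,q}, {p,r}, {q,r}` is not the same in `S` and `S'` -/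
def I3 (n : ℕ) (S S' : List (Finset ℕ)) : ℕ :=
  (((Finset.Icc 1 n).powersetCard 3).filter (fun t =>
    ¬ ∀ a ∈ t.powersetCard 2, ∀ b ∈ t.powersetCard 2, sameOrder S S' a b)).card

/-- `I₂,₂(S,S')`: number of unordered pairs of disjoint pairs in `{1,...,n}` whose
relative order is not the same in `S` and `S'` -/
def I22 (n : ℕ) (S S' : List (Finset ℕ)) : ℕ :=
  ((((Finset.Icc 1 n).powersetCard 2).powersetCard 2).filter (fun P =>
    (∀ a ∈ P, ∀ b ∈ P, a ≠ b → Disjoint a b) ∧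
    ¬ ∀ a ∈ P, ∀ b ∈ P, sameOrder S S' a b)).card

/-- total number of unordered pairs of entries whose relative order differs -/
def InvCount (S S' : List (Finset ℕ)) : ℕ :=
  ((S.toFinset.powersetCard 2).filter (fun P =>
    ¬ ∀ a ∈ P, ∀ b ∈ P, sameOrder S S' a b)).card

/-- number of type I steps in a derivation -/
def countStepsI (c : List (List ℕ)) : ℕ :=
  ((Finset.range (c.length - 1)).filter (fun k => StepI (c.getD k []) (c.getD (k + 1) []))).card

/-- number of type II steps in a derivation -/
def countStepsII (c : List (List ℕ)) : ℕ :=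
  ((Finset.range (c.length - 1)).filter (fun k => StepII (c.getD k []) (c.getD (k + 1) []))).card

/-- position of the strand starting at position `p` after the first `k` letters of `w` -/
def strandPos (w : List ℕ) (p k : ℕ) : ℕ := wperm (w.take k) p

/-- number of unit squares to the right of the `n`-th strand in the braid diagram of `w`,
drawn on an `(n-1) × length w` grid -/
def area (n : ℕ) (w : List ℕ) : ℕ :=
  ((List.range w.length).map (fun k => n - max (strandPos w n k) (strandPos w n (k + 1)))).sum

/-- `u_n = s_{1,1} s_{2,1} ... s_{n,1}` -/
def uWord (n : ℕ) : List ℕ := ((List.range n).map (fun k => sji (k + 1) 1)).flatten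

/-- `v_n = s_{n,1} s_{n,2} ... s_{n,n-1}` -/
def vWord (n : ℕ) : List ℕ := ((List.range (n - 1)).map (fun k => sji n (k + 1))).flatten

/-!
The name sequence of a reduced expression lists every inversion of its permutation exactly
once: two strands whose order gets reversed must cross, and there are only as many letters as
inversions. A braid relation of type I reverses a block of three consecutive names and a
commutation relation a block of two, so they change `Inv` by `3` and by `1`; since `Inv` obeys
the triangle inequality, `Inv(S(u), S(v))` is at most three times the number of steps of any
derivation from `u` to `v`.

As `dist` is an `sInf`, which is `0` for the empty set, this needs a derivation from `u` to `v`
to exist: Matsumoto's theorem. It is proved by induction on the length: reduced expressions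
with first letters `i ≠ j` are bridged by reduced expressions beginning with `i (i+1) i` and
`(i+1) i (i+1)` if `j = i + 1`, or with `i j` and `j i` if `|i - j| ≥ 2`.
-/

section Transpositions

lemma s_apply (i x : ℕ) : s i x = if x = i then i + 1 else if x = i + 1 then i else x := by
  simp [s, Equiv.swap_apply_def]

@[simp] lemma s_apply_self (i : ℕ) : s i i = i + 1 := Equiv.swap_apply_left _ _

@[simp] lemma s_apply_succ (i : ℕ) : s i (i + 1) = i := Equiv.swap_apply_right _ _

lemma s_apply_of_ne {i x : ℕ} (h₁ : x ≠ i) (h₂ : x ≠ i + 1) : s i x = x :=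
  Equiv.swap_apply_of_ne_of_ne h₁ h₂

@[simp] lemma s_mul_self (i : ℕ) : s i * s i = 1 := Equiv.swap_mul_self _ _

@[simp] lemma s_inv (i : ℕ) : (s i)⁻¹ = s i := Equiv.swap_inv _ _

lemma mul_s_apply_self (π : Equiv.Perm ℕ) (i : ℕ) : (π * s i) i = π (i + 1) := by
  simp

lemma mul_s_apply_succ (π : Equiv.Perm ℕ) (i : ℕ) : (π * s i) (i + 1) = π i := by
  simp

lemma mul_s_apply_of_ne (π : Equiv.Perm ℕ) {i x : ℕ} (h₁ : x ≠ i) (h₂ : x ≠ i + 1) :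
    (π * s i) x = π x := by
  rw [Equiv.Perm.mul_apply, s_apply_of_ne h₁ h₂]

lemma s_mul_comm {i j : ℕ} (h : i + 2 ≤ j ∨ j + 2 ≤ i) : s i * s j = s j * s i := by
  ext x
  simp only [Equiv.Perm.mul_apply, s_apply]
  split_ifs <;> omega

lemma s_braid (i : ℕ) : s i * s (i + 1) * s i = s (i + 1) * s i * s (i + 1) := by
  ext x
  simp only [Equiv.Perm.mul_apply, s_apply]
  split_ifs <;> omega

lemma s_mem_Icc_iff {n i : ℕ} (hi : 1 ≤ i) (hin : i + 1 ≤ n) (x : ℕ) :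
    s i x ∈ Finset.Icc 1 n ↔ x ∈ Finset.Icc 1 n := by
  simp only [Finset.mem_Icc, s_apply]
  split_ifs <;> omega

lemma pair_eq_pair_iff {α : Type*} [DecidableEq α] {a b c d : α} :
    ({a, b} : Finset α) = {c, d} ↔ (a = c ∧ b = d) ∨ (a = d ∧ b = c) := by
  refine ⟨fun h => ?_, ?_⟩
  · have h₁ := h ▸ Finset.mem_insert_self a {b}
    have h₂ := h ▸ Finset.mem_insert_of_mem (Finset.mem_singleton_self b)
    have h₃ := h.symm ▸ Finset.mem_insert_self c {d}
    have h₄ := h.symm ▸ Finset.mem_insert_of_mem (Finset.mem_singleton_self d)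
    simp only [Finset.mem_insert, Finset.mem_singleton] at h₁ h₂ h₃ h₄
    rcases h₁ with rfl | rfl <;> rcases h₂ with rfl | rfl <;> tauto
  · rintro (⟨rfl, rfl⟩ | ⟨rfl, rfl⟩)
    · rfl
    · exact Finset.pair_comm a b

lemma s_lt_s_iff_lt_iff_ne {i a b : ℕ} :
    (s i a < s i b ↔ a < b) ↔ ({a, b} : Finset ℕ) ≠ {i, i + 1} := by
  rw [Ne, pair_eq_pair_iff]
  simp only [s_apply]
  split_ifs <;> omega

end Transpositions

section Words

lemma wperm_nil : wperm [] = 1 := rfl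

lemma wperm_cons (i : ℕ) (w : List ℕ) : wperm (i :: w) = wperm w * s i := by
  simp [wperm]

lemma IsExpr.tail {n i : ℕ} {w : List ℕ} (hw : IsExpr n (i :: w)) : IsExpr n w :=
  fun j hj => hw j (List.mem_cons_of_mem i hj)

lemma IsExpr.cons {n i : ℕ} {w : List ℕ} (hi : 1 ≤ i) (hin : i + 1 ≤ n) (hw : IsExpr n w) :
    IsExpr n (i :: w) := by
  rintro j (_ | ⟨_, hj⟩)
  exacts [⟨hi, hin⟩, hw j hj]

lemma IsExpr.wperm_mem_Icc_iff {n : ℕ} {w : List ℕ} (hw : IsExpr n w) (x : ℕ) :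
    wperm w x ∈ Finset.Icc 1 n ↔ x ∈ Finset.Icc 1 n := by
  induction w generalizing x with
  | nil => rfl
  | cons i t ih =>
    obtain ⟨hi, hin⟩ := hw i List.mem_cons_self
    rw [wperm_cons, Equiv.Perm.mul_apply, ih hw.tail, s_mem_Icc_iff hi hin]

lemma IsExpr.wperm_apply_of_notMem {n : ℕ} {w : List ℕ} (hw : IsExpr n w) {x : ℕ}
    (hx : x ∉ Finset.Icc 1 n) : wperm w x = x := by
  induction w with
  | nil => rfl
  | cons i t ih =>
    obtain ⟨hi, hin⟩ := hw i List.mem_cons_self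
    rw [Finset.mem_Icc] at hx
    rw [wperm_cons, Equiv.Perm.mul_apply, s_apply_of_ne (by omega) (by omega), ih hw.tail]

end Words

section Inversions

lemma mem_invSet_iff {n : ℕ} {π : Equiv.Perm ℕ} {p q : ℕ} :
    (p, q) ∈ invSet n π ↔ p ∈ Finset.Icc 1 n ∧ q ∈ Finset.Icc 1 n ∧ p < q ∧ π q < π p := by
  simp only [invSet, Finset.mem_filter, Finset.mem_product, and_assoc]

lemma invSet_one (n : ℕ) : invSet n 1 = ∅ := by
  ext ⟨p, q⟩
  simp only [mem_invSet_iff, Equiv.Perm.one_apply, Finset.notMem_empty, iff_false]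
  omega

lemma map_s_mem_invSet_erase {n i : ℕ} (hi : 1 ≤ i) (hin : i + 1 ≤ n) {π : Equiv.Perm ℕ}
    {x : ℕ × ℕ} (hx : x ∈ (invSet n π).erase (i, i + 1)) :
    (s i x.1, s i x.2) ∈ (invSet n (π * s i)).erase (i, i + 1) := by
  obtain ⟨p, q⟩ := x
  rw [Finset.mem_erase, mem_invSet_iff] at hx ⊢
  obtain ⟨hne, hp, hq, hpq, hπ⟩ := hx
  have hpair : ({p, q} : Finset ℕ) ≠ {i, i + 1} := by
    rw [Ne, pair_eq_pair_iff]
    rintro (⟨rfl, rfl⟩ | ⟨rfl, rfl⟩) <;> simp_all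
  have hs : s i p < s i q := (s_lt_s_iff_lt_iff_ne.2 hpair).2 hpq
  refine ⟨?_, (s_mem_Icc_iff hi hin p).2 hp, (s_mem_Icc_iff hi hin q).2 hq, hs, ?_⟩
  · simp only [ne_eq, Prod.mk.injEq]
    rintro ⟨h₁, h₂⟩
    simp only [s_apply] at h₁ h₂
    split_ifs at h₁ h₂ <;> omega
  · simpa only [Equiv.Perm.mul_apply, Equiv.swap_apply_self, s] using hπ

lemma card_invSet_mul_s_add_one {n i : ℕ} (hi : 1 ≤ i) (hin : i + 1 ≤ n) {π : Equiv.Perm ℕ}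
    (h : π (i + 1) < π i) : (invSet n (π * s i)).card + 1 = (invSet n π).card := by
  have hmem : (i, i + 1) ∈ invSet n π := mem_invSet_iff.2 (by simp_all; omega)
  have hnotMem : (i, i + 1) ∉ invSet n (π * s i) := by
    simp [mem_invSet_iff]; omega
  have hinv : ∀ x : ℕ × ℕ, (s i (s i x.1), s i (s i x.2)) = x := fun x => by
    simp [s, Equiv.swap_apply_self]
  have hbij : ((invSet n (π * s i)).erase (i, i + 1)).card =
      ((invSet n π).erase (i, i + 1)).card := by
    refine Finset.card_nbij' (fun x => (s i x.1, s i x.2)) (fun x => (s i x.1, s i x.2))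
      (fun x hx => ?_) (fun x hx => map_s_mem_invSet_erase hi hin hx)
      (fun x _ => hinv x) (fun x _ => hinv x)
    have := map_s_mem_invSet_erase hi hin (π := π * s i) hx
    rwa [mul_assoc, s_mul_self, mul_one] at this
  rw [Finset.erase_eq_of_notMem hnotMem, Finset.card_erase_of_mem hmem] at hbij
  have := Finset.card_pos.2 ⟨_, hmem⟩
  omega

lemma card_invSet_mul_s_le {n i : ℕ} (hi : 1 ≤ i) (hin : i + 1 ≤ n) (π : Equiv.Perm ℕ) :
    (invSet n (π * s i)).card ≤ (invSet n π).card + 1 := by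
  rcases lt_or_gt_of_ne (π.injective.ne (show i + 1 ≠ i by omega)) with h | h
  · have := card_invSet_mul_s_add_one hi hin h
    omega
  · have := card_invSet_mul_s_add_one hi hin (π := π * s i) (by simpa using h)
    rw [mul_assoc, s_mul_self, mul_one] at this
    omega

lemma card_invSet_wperm_le {n : ℕ} {w : List ℕ} (hw : IsExpr n w) :
    (invSet n (wperm w)).card ≤ w.length := by
  induction w with
  | nil => simp [wperm_nil, invSet_one]
  | cons i t ih =>
    obtain ⟨hi, hin⟩ := hw i List.mem_cons_self
    have := card_invSet_mul_s_le hi hin (wperm t)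
    have := ih hw.tail
    rw [wperm_cons, List.length_cons]
    omega

lemma exists_descent_of_invSet_nonempty {n : ℕ} {π : Equiv.Perm ℕ} (h : (invSet n π).Nonempty) :
    ∃ i, 1 ≤ i ∧ i + 1 ≤ n ∧ π (i + 1) < π i := by
  obtain ⟨⟨p, q⟩, hpq⟩ := h
  rw [mem_invSet_iff, Finset.mem_Icc, Finset.mem_Icc] at hpq
  obtain ⟨hp, hq, hlt, hgt⟩ := hpq
  by_contra! hcon
  have hmono : ∀ k ≤ q - p, π p ≤ π (p + k) := by
    intro k hk
    induction k with
    | zero => rfl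
    | succ k ih => exact (ih (by omega)).trans (hcon (p + k) (by omega) (by omega))
  have := hmono (q - p) le_rfl
  rw [Nat.add_sub_cancel' hlt.le] at this
  omega

lemma IsExpr.wperm_eq_one {n : ℕ} {w : List ℕ} (hw : IsExpr n w)
    (h : invSet n (wperm w) = ∅) : wperm w = 1 := by
  set π := wperm w
  ext x
  -- the least point moved by `π` would form an inversion with its preimage
  induction x using Nat.strong_induction_on with
  | _ x ih =>
    by_cases hx : x ∈ Finset.Icc 1 n
    swap
    · exact hw.wperm_apply_of_notMem hx
    have hxy : π (π⁻¹ x) = x := by simp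
    have hge : x ≤ π⁻¹ x := by
      by_contra! hlt
      have := ih _ hlt
      rw [Equiv.Perm.one_apply, hxy] at this
      omega
    have hge' : x ≤ π x := by
      by_contra! hlt
      exact hlt.ne (π.injective (ih _ hlt))
    rcases hge.lt_or_eq with hlt | heq
    · by_contra hne
      have hmem : (x, π⁻¹ x) ∈ invSet n π := by
        refine mem_invSet_iff.2 ⟨hx, ?_, hlt, ?_⟩
        · rwa [← hw.wperm_mem_Icc_iff, hxy]
        · rw [hxy]; exact lt_of_le_of_ne hge' (Ne.symm hne)
      simp [h] at hmem
    · simpa [← heq] using hxy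

end Inversions

section Reduced

lemma ReducedExpr.cons_of_descent {n i : ℕ} {r : List ℕ} {π : Equiv.Perm ℕ}
    (hr : ReducedExpr n r) (hi : 1 ≤ i) (hin : i + 1 ≤ n) (hrπ : wperm r = π * s i)
    (h : π (i + 1) < π i) : ReducedExpr n (i :: r) ∧ wperm (i :: r) = π := by
  have hπ : wperm (i :: r) = π := by rw [wperm_cons, hrπ, mul_assoc, s_mul_self, mul_one]
  have hcard := card_invSet_mul_s_add_one (n := n) hi hin h
  refine ⟨⟨hr.1.cons hi hin, ?_⟩, hπ⟩
  rw [hπ, List.length_cons, hr.2, hrπ, hcard]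

lemma ReducedExpr.tail {n i : ℕ} {t : List ℕ} (h : ReducedExpr n (i :: t)) :
    ReducedExpr n t := by
  obtain ⟨hi, hin⟩ := h.1 i List.mem_cons_self
  have h₁ := h.2
  have h₂ := card_invSet_mul_s_le hi hin (wperm t)
  have h₃ := card_invSet_wperm_le (n := n) h.1.tail
  rw [List.length_cons, wperm_cons] at h₁
  exact ⟨h.1.tail, by omega⟩

lemma ReducedExpr.descent {n i : ℕ} {t : List ℕ} (h : ReducedExpr n (i :: t)) :
    wperm (i :: t) (i + 1) < wperm (i :: t) i := by
  obtain ⟨hi, hin⟩ := h.1 i List.mem_cons_self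
  by_contra! hasc
  have hne : wperm (i :: t) i ≠ wperm (i :: t) (i + 1) := (Equiv.injective _).ne (by omega)
  have hcard := card_invSet_mul_s_add_one (n := n) hi hin (π := wperm (i :: t) * s i)
    (by simpa using lt_of_le_of_ne hasc hne)
  have h₁ := h.2
  have h₂ := card_invSet_wperm_le (n := n) h.1.tail
  rw [wperm_cons, mul_assoc, s_mul_self, mul_one, mul_assoc, s_mul_self, mul_one] at hcard
  rw [List.length_cons, wperm_cons] at h₁
  omega

lemma IsExpr.exists_reducedExpr {n : ℕ} {w : List ℕ} (hw : IsExpr n w) :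
    ∃ r, ReducedExpr n r ∧ wperm r = wperm w := by
  induction hL : (invSet n (wperm w)).card using Nat.strong_induction_on generalizing w with
  | _ L ih =>
    rcases (invSet n (wperm w)).eq_empty_or_nonempty with h | h
    · refine ⟨[], ⟨fun _ h => (List.not_mem_nil h).elim, ?_⟩, (hw.wperm_eq_one h).symm⟩
      simp [wperm_nil, invSet_one]
    · obtain ⟨i, hi, hin, hdesc⟩ := exists_descent_of_invSet_nonempty h
      have hcard := card_invSet_mul_s_add_one hi hin hdesc
      rw [← wperm_cons] at hcard
      obtain ⟨r, hr, hrw⟩ := ih _ (by omega) (hw.cons hi hin) rfl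
      exact ⟨i :: r, hr.cons_of_descent hi hin (hrw.trans (wperm_cons i w)) hdesc⟩

end Reduced

section Matsumoto

open Relation

lemma BraidStep.symm {u v : List ℕ} (h : BraidStep u v) : BraidStep v u := by
  rcases h with ⟨a, b, i, j, hij⟩ | ⟨a, b, i, j, hij⟩
  · exact Or.inl (StepI.mk a b j i hij.symm)
  · exact Or.inr (StepII.mk a b j i hij.symm)

lemma BraidStep.cons {u v : List ℕ} (h : BraidStep u v) (k : ℕ) :
    BraidStep (k :: u) (k :: v) := by
  rcases h with ⟨a, b, i, j, hij⟩ | ⟨a, b, i, j, hij⟩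
  · exact Or.inl (StepI.mk (k :: a) b i j hij)
  · exact Or.inr (StepII.mk (k :: a) b i j hij)

lemma exists_reducedExpr_comm_of_descents {n i j : ℕ} {w : List ℕ} (hw : IsExpr n w)
    (hi : 1 ≤ i) (hin : i + 1 ≤ n) (hj : 1 ≤ j) (hjn : j + 1 ≤ n) (hij : i + 2 ≤ j ∨ j + 2 ≤ i)
    (hdi : wperm w (i + 1) < wperm w i) (hdj : wperm w (j + 1) < wperm w j) :
    ∃ r, (ReducedExpr n (i :: j :: r) ∧ wperm (i :: j :: r) = wperm w) ∧
      (ReducedExpr n (j :: i :: r) ∧ wperm (j :: i :: r) = wperm w) := by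
  set π := wperm w
  obtain ⟨r, hr, hrπ⟩ := ((hw.cons hi hin).cons hj hjn).exists_reducedExpr
  rw [wperm_cons, wperm_cons] at hrπ
  have hcomm : π * s i * s j = π * s j * s i := by rw [mul_assoc, mul_assoc, s_mul_comm hij]
  obtain ⟨hjr, hjrπ⟩ := hr.cons_of_descent hj hjn hrπ
    (by simpa (disch := omega) only [mul_s_apply_of_ne] using hdj)
  obtain ⟨hir, hirπ⟩ := hr.cons_of_descent hi hin (hrπ.trans hcomm)
    (by simpa (disch := omega) only [mul_s_apply_of_ne] using hdi)
  exact ⟨r, hjr.cons_of_descent hi hin hjrπ hdi, hir.cons_of_descent hj hjn hirπ hdj⟩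

lemma exists_reducedExpr_braid_of_descents {n i : ℕ} {w : List ℕ} (hw : IsExpr n w)
    (hi : 1 ≤ i) (hin : i + 2 ≤ n)
    (hdi : wperm w (i + 1) < wperm w i) (hdi' : wperm w (i + 2) < wperm w (i + 1)) :
    ∃ r, (ReducedExpr n (i :: (i + 1) :: i :: r) ∧ wperm (i :: (i + 1) :: i :: r) = wperm w) ∧
      (ReducedExpr n ((i + 1) :: i :: (i + 1) :: r) ∧
        wperm ((i + 1) :: i :: (i + 1) :: r) = wperm w) := by
  set π := wperm w
  obtain ⟨r, hr, hrπ⟩ :=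
    (((hw.cons hi (by omega)).cons (by omega) hin).cons hi (by omega)).exists_reducedExpr
  rw [wperm_cons, wperm_cons, wperm_cons] at hrπ
  have hbraid : π * s i * s (i + 1) * s i = π * s (i + 1) * s i * s (i + 1) := by
    simpa only [mul_assoc] using congrArg (π * ·) (s_braid i)
  obtain ⟨h₁, h₁π⟩ := hr.cons_of_descent hi (by omega) hrπ (by
    simpa (disch := omega) only [mul_s_apply_self, mul_s_apply_succ, mul_s_apply_of_ne]
      using hdi')
  obtain ⟨h₂, h₂π⟩ := h₁.cons_of_descent (by omega) hin h₁π (by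
    simpa (disch := omega) only [mul_s_apply_succ, mul_s_apply_of_ne] using hdi'.trans hdi)
  obtain ⟨h₁', h₁'π⟩ := hr.cons_of_descent (by omega) hin (hrπ.trans hbraid) (by
    simpa (disch := omega) only [mul_s_apply_self, mul_s_apply_succ, mul_s_apply_of_ne]
      using hdi)
  obtain ⟨h₂', h₂'π⟩ := h₁'.cons_of_descent hi (by omega) h₁'π (by
    simpa (disch := omega) only [mul_s_apply_self, mul_s_apply_of_ne] using hdi'.trans hdi)
  exact ⟨r, h₂.cons_of_descent hi (by omega) h₂π hdi,
    h₂'.cons_of_descent (by omega) hin h₂'π hdi'⟩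

lemma exists_braidStep_of_descents {n i j : ℕ} {w : List ℕ} (hw : IsExpr n w)
    (hi : 1 ≤ i) (hin : i + 1 ≤ n) (hj : 1 ≤ j) (hjn : j + 1 ≤ n) (hij : i ≠ j)
    (hdi : wperm w (i + 1) < wperm w i) (hdj : wperm w (j + 1) < wperm w j) :
    ∃ p q, (ReducedExpr n (i :: p) ∧ wperm (i :: p) = wperm w) ∧
      (ReducedExpr n (j :: q) ∧ wperm (j :: q) = wperm w) ∧ BraidStep (i :: p) (j :: q) := by
  obtain rfl | rfl | hfar : j = i + 1 ∨ i = j + 1 ∨ (i + 2 ≤ j ∨ j + 2 ≤ i) := by omega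
  · obtain ⟨r, hp, hq⟩ := exists_reducedExpr_braid_of_descents hw hi hjn hdi hdj
    exact ⟨_, _, hp, hq, Or.inl (StepI.mk [] r i (i + 1) (Or.inl rfl))⟩
  · obtain ⟨r, hq, hp⟩ := exists_reducedExpr_braid_of_descents hw hj hin hdj hdi
    exact ⟨_, _, hp, hq, BraidStep.symm (u := j :: (j + 1) :: j :: r)
      (Or.inl (StepI.mk [] r j (j + 1) (Or.inl rfl)))⟩
  · obtain ⟨r, hp, hq⟩ := exists_reducedExpr_comm_of_descents hw hi hin hj hjn hfar hdi hdj
    exact ⟨_, _, hp, hq, Or.inr (StepII.mk [] r i j hfar)⟩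

/-- Matsumoto's theorem for the symmetric group. -/
theorem reflTransGen_braidStep_of_reducedExpr {n : ℕ} {u v : List ℕ} (hu : ReducedExpr n u)
    (hv : ReducedExpr n v) (huv : wperm u = wperm v) : ReflTransGen BraidStep u v := by
  induction hL : u.length using Nat.strong_induction_on generalizing u v with
  | _ L ih =>
    have same_head : ∀ {k x y}, ReducedExpr n (k :: x) → ReducedExpr n (k :: y) →
        wperm (k :: x) = wperm u → wperm (k :: y) = wperm u →
        ReflTransGen BraidStep (k :: x) (k :: y) := by
      intro k x y hx hy hxu hyu
      have htail : wperm x = wperm y :=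
        mul_right_cancel (by rw [← wperm_cons, ← wperm_cons, hxu, hyu])
      have hxL : x.length < L := by
        have : (k :: x).length = L := by rw [hx.2, hxu, ← hu.2, hL]
        rw [List.length_cons] at this
        omega
      exact (ih _ hxL hx.tail hy.tail htail rfl).lift _ (fun _ _ h => h.cons k)
    have huv_len : u.length = v.length := by rw [hu.2, hv.2, huv]
    rcases u with _ | ⟨i, u₁⟩ <;> rcases v with _ | ⟨j, v₁⟩
    · exact .refl
    · simp at huv_len
    · simp at huv_len
    · by_cases hij : i = j
      · subst hij
        exact same_head hu hv rfl huv.symm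
      obtain ⟨hi, hin⟩ := hu.1 i List.mem_cons_self
      obtain ⟨hj, hjn⟩ := hv.1 j List.mem_cons_self
      obtain ⟨p, q, ⟨hp, hpu⟩, ⟨hq, hqu⟩, hstep⟩ := exists_braidStep_of_descents hu.1 hi hin hj
        hjn hij hu.descent (huv ▸ hv.descent)
      exact (same_head hu hp rfl hpu).trans
        ((ReflTransGen.single hstep).trans (same_head hq hv hqu huv.symm))

end Matsumoto

section Names

lemma namesAux_append (a b : List ℕ) (π : Equiv.Perm ℕ) :
    namesAux π (a ++ b) = namesAux π a ++ namesAux (wperm a * π) b := by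
  induction a generalizing π with
  | nil => simp [namesAux, wperm_nil]
  | cons i t ih => simp [namesAux, ih, wperm_cons, mul_assoc]

lemma length_namesAux (w : List ℕ) (π : Equiv.Perm ℕ) : (namesAux π w).length = w.length := by
  induction w generalizing π with
  | nil => rfl
  | cons i t ih => simp [namesAux, ih]

lemma pair_mem_namesAux {w : List ℕ} {π : Equiv.Perm ℕ} {p q : ℕ}
    (h : ¬(π p < π q ↔ wperm w (π p) < wperm w (π q))) : {p, q} ∈ namesAux π w := by
  induction w generalizing π with
  | nil => exact absurd Iff.rfl h
  | cons i t ih =>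
    rw [namesAux, List.mem_cons]
    by_cases hcross : ({π p, π q} : Finset ℕ) = {i, i + 1}
    · left
      rcases pair_eq_pair_iff.1 hcross with ⟨hp, hq⟩ | ⟨hp, hq⟩
      · subst hp
        simp [← hq]
      · subst hq
        simp [← hp, Finset.pair_comm]
    · right
      refine ih ?_
      rw [Equiv.Perm.mul_apply, Equiv.Perm.mul_apply, s_lt_s_iff_lt_iff_ne.2 hcross]
      simpa only [wperm_cons, Equiv.Perm.mul_apply] using h

/-- A reduced expression has as many letters as inversions, and every inversion names one
of its letters; so no name repeats. -/
lemma ReducedExpr.names_nodup {n : ℕ} {w : List ℕ} (hw : ReducedExpr n w) :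
    (names w).Nodup := by
  have hcard : (invSet n (wperm w)).card ≤ (names w).toFinset.card := by
    refine Finset.card_le_card_of_injOn (fun x => {x.1, x.2}) ?_ ?_
    · rintro ⟨p, q⟩ hpq
      rw [Finset.mem_coe, mem_invSet_iff] at hpq
      exact List.mem_toFinset.2 (pair_mem_namesAux (π := 1) (by simp; omega))
    · rintro ⟨p, q⟩ hpq ⟨p', q'⟩ hpq' h
      rw [Finset.mem_coe, mem_invSet_iff] at hpq hpq'
      rcases pair_eq_pair_iff.1 h with ⟨rfl, rfl⟩ | ⟨rfl, rfl⟩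
      · rfl
      · omega
  have hlen : (names w).length = (invSet n (wperm w)).card := by
    rw [names, length_namesAux, hw.2]
  have hcard_eq : (names w).toFinset.card = (names w).length :=
    le_antisymm (List.toFinset_card_le _) (hlen ▸ hcard)
  exact Multiset.coe_nodup.1 (Multiset.toFinset_card_eq_card_iff_nodup.1 hcard_eq)

end Names

section InvCount

lemma invCount_self (S : List (Finset ℕ)) : InvCount S S = 0 := by
  simp [InvCount, sameOrder]

lemma invCount_le_add {S S' : List (Finset ℕ)} (S'' : List (Finset ℕ))
    (h : S.toFinset = S'.toFinset) :
    InvCount S S'' ≤ InvCount S S' + InvCount S' S'' := by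
  unfold InvCount
  rw [← h]
  refine (Finset.card_le_card fun P => ?_).trans (Finset.card_union_le _ _)
  simp only [Finset.mem_filter, Finset.mem_union]
  rintro ⟨hP, hne⟩
  by_contra! hcon
  exact hne fun a ha b hb => (hcon.1 hP a ha b hb).trans (hcon.2 hP a ha b hb)

lemma idxOf_reverse {α : Type*} [BEq α] [LawfulBEq α] {M : List α} (hM : M.Nodup) {a : α}
    (ha : a ∈ M) :
    M.reverse.idxOf a = M.length - 1 - M.idxOf a := by
  have hlt : M.idxOf a < M.length := List.idxOf_lt_length_iff.2 ha
  have hlt' : M.length - 1 - M.idxOf a < M.reverse.length := by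
    rw [List.length_reverse]; omega
  have hget : M.reverse[M.length - 1 - M.idxOf a] = a := by
    rw [List.getElem_reverse]
    simp only [show M.length - 1 - (M.length - 1 - M.idxOf a) = M.idxOf a by omega]
    exact List.getElem_idxOf hlt
  conv_lhs => rw [← hget]
  exact (List.nodup_reverse.2 hM).idxOf_getElem _ hlt'

lemma idxOf_append_append_of_mem {α : Type*} [BEq α] [LawfulBEq α] {A M : List α}
    (B : List α) {a : α} (hA : a ∉ A) (hM : a ∈ M) : (A ++ M ++ B).idxOf a = A.length + M.idxOf a := by
  rw [List.idxOf_append_of_mem (List.mem_append_right A hM), List.idxOf_append_of_notMem hA]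

lemma idxOf_append_append_of_notMem {α : Type*} [BEq α] [LawfulBEq α] (A B : List α)
    {M : List α} {a : α} (hM : a ∉ M) :
    (A ++ M.reverse ++ B).idxOf a = (A ++ M ++ B).idxOf a ∧
      ((A ++ M ++ B).idxOf a < A.length ∨ A.length + M.length ≤ (A ++ M ++ B).idxOf a) := by
  by_cases hA : a ∈ A
  · rw [List.idxOf_append_of_mem (List.mem_append_left _ hA),
      List.idxOf_append_of_mem (List.mem_append_left _ hA), List.idxOf_append_of_mem hA,
      List.idxOf_append_of_mem hA]
    exact ⟨rfl, Or.inl (List.idxOf_lt_length_iff.2 hA)⟩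
  · have hAM : ∀ M' : List α, a ∉ M' → a ∉ A ++ M' := fun M' hM' h =>
      (List.mem_append.1 h).elim hA hM'
    rw [List.idxOf_append_of_notMem (hAM _ (by rwa [List.mem_reverse])),
      List.idxOf_append_of_notMem (hAM _ hM)]
    simp

lemma not_sameOrder_append_reverse_append_iff {A M B : List (Finset ℕ)}
    (hnd : (A ++ M ++ B).Nodup) (a b : Finset ℕ) :
    ¬sameOrder (A ++ M ++ B) (A ++ M.reverse ++ B) a b ↔ a ≠ b ∧ a ∈ M ∧ b ∈ M := by
  have hM : M.Nodup := hnd.of_append_left.of_append_right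
  have hAM : ∀ c ∈ M, c ∉ A := fun c hcM hcA =>
    List.disjoint_of_nodup_append hnd.of_append_left hcA hcM
  have hrev : ∀ c ∈ M, (A ++ M.reverse ++ B).idxOf c =
      A.length + (M.length - 1 - M.idxOf c) := fun c hc => by
    rw [idxOf_append_append_of_mem B (hAM c hc) (List.mem_reverse.2 hc), idxOf_reverse hM hc]
  have hlt : ∀ c ∈ M, M.idxOf c < M.length := fun c hc => List.idxOf_lt_length_iff.2 hc
  unfold sameOrder
  by_cases ha : a ∈ M <;> by_cases hb : b ∈ M
  · by_cases hab : a = b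
    · simp [hab]
    have := idxOf_append_append_of_mem B (hAM a ha) ha
    have := idxOf_append_append_of_mem B (hAM b hb) hb
    have := hrev a ha; have := hrev b hb; have := hlt a ha; have := hlt b hb
    have : M.idxOf a ≠ M.idxOf b := fun h => hab ((List.idxOf_inj ha).1 h)
    simp only [ha, hb, hab, ne_eq, not_false_eq_true, and_true, iff_true]
    omega
  · have := idxOf_append_append_of_mem B (hAM a ha) ha
    have := hrev a ha; have := hlt a ha
    have := idxOf_append_append_of_notMem A B hb
    simp only [hb, and_false, iff_false, not_not]
    omega
  · have := idxOf_append_append_of_mem B (hAM b hb) hb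
    have := hrev b hb; have := hlt b hb
    have := idxOf_append_append_of_notMem A B ha
    simp only [ha, false_and, and_false, iff_false, not_not]
    omega
  · have := idxOf_append_append_of_notMem A B ha
    have := idxOf_append_append_of_notMem A B hb
    simp only [ha, false_and, and_false, iff_false, not_not]
    omega

lemma invCount_append_reverse_append (A M B : List (Finset ℕ)) (hnd : (A ++ M ++ B).Nodup) :
    InvCount (A ++ M ++ B) (A ++ M.reverse ++ B) = M.length.choose 2 := by
  have hM : M.Nodup := hnd.of_append_left.of_append_right
  rw [InvCount, ← List.toFinset_card_of_nodup hM, ← Finset.card_powersetCard]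
  congr 1
  ext P
  simp only [Finset.mem_filter, Finset.mem_powersetCard, not_forall,
    not_sameOrder_append_reverse_append_iff hnd, exists_prop]
  constructor
  · rintro ⟨⟨-, hP⟩, a, haP, b, hbP, hab, ha, hb⟩
    have hPab : P = {a, b} := (Finset.eq_of_subset_of_card_le
      (Finset.insert_subset haP (Finset.singleton_subset_iff.2 hbP))
      (by rw [hP, Finset.card_pair hab])).symm
    subst hPab
    simp [Finset.insert_subset_iff, ha, hb, hab]
  · rintro ⟨hPM, hP⟩
    obtain ⟨a, b, hab, rfl⟩ := Finset.card_eq_two.1 hP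
    rw [Finset.insert_subset_iff, Finset.singleton_subset_iff, List.mem_toFinset,
      List.mem_toFinset] at hPM
    refine ⟨⟨?_, hP⟩, a, by simp, b, by simp, hab, hPM⟩
    simp [Finset.insert_subset_iff, hPM]

end InvCount

section BraidMoves

/-- The three strands meeting in `i (i+1) i` cross pairwise, in the opposite order in
`(i+1) i (i+1)`. -/
lemma names_braid (a b : List ℕ) (i : ℕ) :
    ∃ A M B, names (a ++ i :: (i + 1) :: i :: b) = A ++ M ++ B ∧
      names (a ++ (i + 1) :: i :: (i + 1) :: b) = A ++ M.reverse ++ B ∧ M.length = 3 := by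
  set π := wperm a
  have hbraid : s (i + 1) * (s i * (s (i + 1) * π)) = s i * (s (i + 1) * (s i * π)) := by
    simpa only [mul_assoc] using congrArg (· * π) (s_braid i).symm
  refine ⟨names a,
    [{π⁻¹ i, π⁻¹ (i + 1)}, {π⁻¹ i, π⁻¹ (i + 2)}, {π⁻¹ (i + 1), π⁻¹ (i + 2)}],
    namesAux (s i * (s (i + 1) * (s i * π))) b, ?_, ?_, rfl⟩
  · simp (disch := omega) [names, namesAux, namesAux_append, s_apply_of_ne, π]
  · simp (disch := omega) [names, namesAux, namesAux_append, s_apply_of_ne, hbraid, π]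

lemma names_comm (a b : List ℕ) {i j : ℕ} (hij : i + 2 ≤ j ∨ j + 2 ≤ i) :
    ∃ A M B, names (a ++ i :: j :: b) = A ++ M ++ B ∧
      names (a ++ j :: i :: b) = A ++ M.reverse ++ B ∧ M.length = 2 := by
  set π := wperm a
  have hcomm : s j * (s i * π) = s i * (s j * π) := by
    rw [← mul_assoc, ← mul_assoc, s_mul_comm hij]
  refine ⟨names a, [{π⁻¹ i, π⁻¹ (i + 1)}, {π⁻¹ j, π⁻¹ (j + 1)}],
    namesAux (s j * (s i * π)) b, ?_, ?_, rfl⟩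
  · simp (disch := omega) [names, namesAux, namesAux_append, s_apply_of_ne, π]
  · simp (disch := omega) [names, namesAux, namesAux_append, s_apply_of_ne, hcomm, π]

lemma StepI.names_eq {u v : List ℕ} (h : StepI u v) :
    ∃ A M B, names u = A ++ M ++ B ∧ names v = A ++ M.reverse ++ B ∧ M.length = 3 := by
  rcases h with ⟨a, b, i, j, rfl | rfl⟩
  · exact names_braid a b i
  · obtain ⟨A, M, B, hu, hv, hM⟩ := names_braid a b j
    exact ⟨A, M.reverse, B, hv, by rwa [List.reverse_reverse], by rwa [List.length_reverse]⟩

lemma StepII.names_eq {u v : List ℕ} (h : StepII u v) :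
    ∃ A M B, names u = A ++ M ++ B ∧ names v = A ++ M.reverse ++ B ∧ M.length = 2 := by
  rcases h with ⟨a, b, i, j, hij⟩
  exact names_comm a b hij

lemma StepI.invCount_names {u v : List ℕ} (h : StepI u v) (hu : (names u).Nodup) :
    InvCount (names u) (names v) = 3 := by
  obtain ⟨A, M, B, hu', hv', hM⟩ := h.names_eq
  rw [hu', hv', invCount_append_reverse_append A M B (hu' ▸ hu), hM]
  rfl

lemma StepII.invCount_names {u v : List ℕ} (h : StepII u v) (hu : (names u).Nodup) :
    InvCount (names u) (names v) = 1 := by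
  obtain ⟨A, M, B, hu', hv', hM⟩ := h.names_eq
  rw [hu', hv', invCount_append_reverse_append A M B (hu' ▸ hu), hM]
  rfl

lemma BraidStep.names_perm {u v : List ℕ} (h : BraidStep u v) : (names u).Perm (names v) := by
  obtain ⟨A, M, B, hu, hv, -⟩ | ⟨A, M, B, hu, hv, -⟩ := h.imp StepI.names_eq StepII.names_eq
  all_goals
    rw [hu, hv]
    exact (List.reverse_perm M).symm.append_left A |>.append_right B

end BraidMoves

section Distance

open Relation

lemma invCount_names_le_of_isChain {w v : List ℕ} {c : List (List ℕ)} (hw : (names w).Nodup)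
    (hc : (w :: c).IsChain BraidStep) (hv : (w :: c).getLast? = some v) :
    InvCount (names w) (names v) ≤ 3 * c.length := by
  induction c generalizing w with
  | nil =>
    obtain rfl : w = v := by simpa using hv
    simp [invCount_self]
  | cons w' c ih =>
    rw [List.isChain_cons_cons] at hc
    have hperm := hc.1.names_perm
    have hstep : InvCount (names w) (names w') ≤ 3 := by
      rcases hc.1 with h | h
      · exact (h.invCount_names hw).le
      · rw [h.invCount_names hw]; omega
    have htail := ih (hperm.nodup_iff.1 hw) hc.2 (by rwa [List.getLast?_cons_cons] at hv)
    have := invCount_le_add (names v) (List.toFinset_eq_of_perm _ _ hperm)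
    rw [List.length_cons]
    omega

lemma invCount_names_le_three_mul_dist {u v : List ℕ} (hu : (names u).Nodup)
    (huv : ReflTransGen BraidStep u v) : InvCount (names u) (names v) ≤ 3 * dist u v := by
  obtain ⟨c, hc, hlast⟩ := List.exists_isChain_cons_of_relationReflTransGen huv
  have hlast? : (u :: c).getLast? = some v := by
    rw [List.getLast?_eq_getLast_of_ne_nil (List.cons_ne_nil _ _), hlast]
  have hne : {k | ∃ c, IsDeriv u v c ∧ c.length = k + 1}.Nonempty :=
    ⟨c.length, u :: c, ⟨hc, rfl, hlast?⟩, rfl⟩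
  obtain ⟨c₀, ⟨hc₀, hhead, hlast₀⟩, hlen⟩ := Nat.sInf_mem hne
  rcases c₀ with _ | ⟨u', c₀⟩
  · simp at hhead
  obtain rfl : u' = u := by simpa using hhead
  have := invCount_names_le_of_isChain hu hc₀ hlast₀
  rw [List.length_cons] at hlen
  rwa [_root_.dist, ← Nat.add_right_cancel hlen]

end Distance

/-- `dist(u,v) ≥ Inv(S(u),S(v))/3`; indeed a type I relation changes `Inv` by exactly
`3` and a commutation relation changes it by exactly `1`. -/
theorem dist_ge_inv_div_three (n : ℕ) (u v : List ℕ)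
    (hu : ReducedExpr n u) (hv : ReducedExpr n v) (heq : wperm u = wperm v) :
    dist u v ≥ InvCount (names u) (names v) / 3 ∧
    (∀ w w' : List ℕ, ReducedExpr n w → StepI w w' →
      InvCount (names w) (names w') = 3) ∧
    (∀ w w' : List ℕ, ReducedExpr n w → StepII w w' →
      InvCount (names w) (names w') = 1) := by
  refine ⟨?_, fun w w' hw h => h.invCount_names hw.names_nodup,
    fun w w' hw h => h.invCount_names hw.names_nodup⟩
  have := invCount_names_le_three_mul_dist hu.names_nodup
    (reflTransGen_braidStep_of_reducedExpr hu hv heq)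
  omega

end
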